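/- arXiv:2103.04665 — 2 statements merged into one kernel-verified Lean document; each statement's English description precedes it below -/
import Mathlib

section
/- Let η : [0,∞) → ℝ be smooth with η ≡ 1 on [0,1/2], η ≡ 0 on [1,∞), 0 ≤ η ≤ 1 and η' ≤ 0. Define f(t) = η(t) + (1 − η(t)) t^{1/4}. Then for all t ≥ 0 one has f(t) − 4 t f'(t) ≥ 0, f(t) ≥ 1/2, and f(t) ≥ t^{1/4}. -/
open Real Set

/-- If η is a smooth cutoff on [0,∞) with η ≡ 1 on [0,1/2], η ≡ 0 on [1,∞),
0 ≤ η ≤ 1 and η' ≤ 0, and f(t) = η(t) + (1 − η(t)) t^{1/4}, then for all t ≥ 0: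
f(t) − 4 t f'(t) ≥ 0, f(t) ≥ 1/2 and f(t) ≥ t^{1/4}. -/
theorem stmt_0 (η : ℝ → ℝ)
    (hsmooth : ContDiffOn ℝ (⊤ : ℕ∞) η (Set.Ici 0))
    (hone : ∀ t ∈ Set.Icc (0:ℝ) (1/2), η t = 1)
    (hzero : ∀ t : ℝ, 1 ≤ t → η t = 0)
    (hrange : ∀ t : ℝ, 0 ≤ t → 0 ≤ η t ∧ η t ≤ 1)
    (hmono : ∀ t : ℝ, 0 ≤ t → derivWithin η (Set.Ici 0) t ≤ 0)
    (f : ℝ → ℝ)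
    (hf : ∀ t : ℝ, 0 ≤ t → f t = η t + (1 - η t) * t ^ ((1:ℝ)/4)) :
    ∀ t : ℝ, 0 ≤ t →
      0 ≤ f t - 4 * t * derivWithin f (Set.Ici 0) t ∧
      1/2 ≤ f t ∧
      t ^ ((1:ℝ)/4) ≤ f t := by
  intro t ht
  obtain ⟨hη0, hη1⟩ := hrange t ht
  have hft := hf t ht
  have hr_nonneg : 0 ≤ t ^ ((1:ℝ)/4) := Real.rpow_nonneg ht _
  -- third claim
  have third : t ^ ((1:ℝ)/4) ≤ f t := by
    rcases le_or_gt t 1 with h1 | h1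
    · have hr1 : t ^ ((1:ℝ)/4) ≤ 1 := Real.rpow_le_one ht h1 (by norm_num)
      nlinarith
    · rw [hft, hzero t h1.le]; ring_nf; exact le_refl _
  -- second claim
  have second : 1/2 ≤ f t := by
    rcases le_or_gt t (1/2) with h2 | h2
    · rw [hft, hone t ⟨ht, h2⟩]; ring_nf; norm_num
    · have h16 : ((1:ℝ)/16) ^ ((1:ℝ)/4) = 1/2 := by
        rw [show (1/16:ℝ) = (1/2:ℝ)^(4:ℕ) by norm_num, ← Real.rpow_natCast,
          ← Real.rpow_mul (by norm_num)]
        norm_num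
      have hr : (1:ℝ)/2 ≤ t ^ ((1:ℝ)/4) := by
        rw [← h16]
        exact Real.rpow_le_rpow (by norm_num) (by linarith) (by norm_num)
      nlinarith
  refine ⟨?_, second, third⟩
  rcases eq_or_lt_of_le ht with rfl | htpos
  · have hf0 : f 0 = 1 := by
      rw [hf 0 le_rfl, hone 0 ⟨le_rfl, by norm_num⟩]; ring
    rw [hf0]; ring_nf; norm_num
  -- t > 0 : compute the derivative
  have hηd : DifferentiableAt ℝ η t :=
    (hsmooth.contDiffAt (Ici_mem_nhds htpos)).differentiableAt (by simp)
  have hrpow : HasDerivAt (fun x : ℝ => x ^ ((1:ℝ)/4)) ((1:ℝ)/4 * t ^ ((1:ℝ)/4 - 1)) t :=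
    Real.hasDerivAt_rpow_const (Or.inl htpos.ne')
  have hg : HasDerivAt (fun x => η x + (1 - η x) * x ^ ((1:ℝ)/4))
      (deriv η t + ((0 - deriv η t) * t ^ ((1:ℝ)/4)
        + (1 - η t) * ((1:ℝ)/4 * t ^ ((1:ℝ)/4 - 1)))) t :=
    hηd.hasDerivAt.add (((hasDerivAt_const t (1:ℝ)).sub hηd.hasDerivAt).mul hrpow)
  have hfg : f =ᶠ[nhds t] fun x => η x + (1 - η x) * x ^ ((1:ℝ)/4) := by
    filter_upwards [Ioi_mem_nhds htpos] with x hx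
    exact hf x (le_of_lt hx)
  have hfd : HasDerivAt f (deriv η t + ((0 - deriv η t) * t ^ ((1:ℝ)/4)
        + (1 - η t) * ((1:ℝ)/4 * t ^ ((1:ℝ)/4 - 1)))) t :=
    hg.congr_of_eventuallyEq hfg
  have hdw : derivWithin f (Set.Ici 0) t = deriv η t + ((0 - deriv η t) * t ^ ((1:ℝ)/4)
        + (1 - η t) * ((1:ℝ)/4 * t ^ ((1:ℝ)/4 - 1))) := by
    rw [derivWithin_of_mem_nhds (Ici_mem_nhds htpos), hfd.deriv]
  have hid : t * t ^ ((1:ℝ)/4 - 1) = t ^ ((1:ℝ)/4) := by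
    nth_rewrite 1 [← Real.rpow_one t]
    rw [← Real.rpow_add htpos]
    norm_num
  rw [hdw, hft]
  rcases le_or_gt t 1 with h1 | h1
  · have hA' : deriv η t ≤ 0 := by
      have := hmono t ht
      rwa [derivWithin_of_mem_nhds (Ici_mem_nhds htpos)] at this
    have hr1 : t ^ ((1:ℝ)/4) ≤ 1 := Real.rpow_le_one ht h1 (by norm_num)
    have key : 0 ≤ (-(deriv η t)) * (1 - t ^ ((1:ℝ)/4)) :=
      mul_nonneg (by linarith) (by linarith)
    nlinarith [mul_nonneg (le_of_lt htpos) key]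
  · have hA : η t = 0 := hzero t h1.le
    have hA' : deriv η t = 0 := by
      have hev : η =ᶠ[nhds t] fun _ => (0:ℝ) := by
        filter_upwards [Ioi_mem_nhds h1] with x hx
        exact hzero x (le_of_lt hx)
      rw [hev.deriv_eq, deriv_const]
    rw [hA, hA']
    nlinarith
end

section
/- Let N ≥ 2, s ∈ (0,1), k ∈ ℕ, and let ψ be a smooth function on the closed upper half-sphere S^N_+ ⊂ S^N. Define Ψ(z) = |z|^{k+s} ψ(z/|z|) for z ∈ ℝ^{N+1}_+ ∖ {0}. Then div(t^{1−2s} ∇Ψ) = 0 in ℝ^{N+1}_+ if and only if −div_{S^N}(θ_{N+1}^{1−2s} ∇_{S^N} ψ) = θ_{N+1}^{1−2s} (k+s)(k+N−s) ψ on S^N_+. -/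
open Real Set

noncomputable section

/-- The degenerate divergence-form operator U ↦ div(t^{1−2s} ∇U) on
ℝ^{N+1}, where t = z_{N+1} is the last coordinate. -/
def degenOp (N : ℕ) (s : ℝ) (U : EuclideanSpace ℝ (Fin (N+1)) → ℝ)
    (z : EuclideanSpace ℝ (Fin (N+1))) : ℝ :=
  ∑ i : Fin (N+1),
    fderiv ℝ (fun w : EuclideanSpace ℝ (Fin (N+1)) =>
        (w (Fin.last N)) ^ (1 - 2*s) * fderiv ℝ U w (EuclideanSpace.single i 1))
      z (EuclideanSpace.single i 1)

/-- The 0-homogeneous extension of the tangential vector field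
θ ↦ θ_{N+1}^{1−2s} ∇_{S^N}ψ(θ) on the sphere, for ψ given as a 0-homogeneous
function on ℝ^{N+1}∖{0} (so that, for |θ| = 1, ∇_{S^N}ψ(θ) = ∇ψ(θ) and
div_{S^N} of the tangential field at θ equals the ambient divergence of this
extension at θ). -/
def sphField (N : ℕ) (s : ℝ) (ψ : EuclideanSpace ℝ (Fin (N+1)) → ℝ)
    (z : EuclideanSpace ℝ (Fin (N+1))) : EuclideanSpace ℝ (Fin (N+1)) :=
  (((z (Fin.last N)) / ‖z‖) ^ (1 - 2*s) * ‖z‖) • gradient ψ z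

/-- The surface divergence div_{S^N}(θ_{N+1}^{1−2s} ∇_{S^N}ψ) at a point θ of
the unit sphere, computed as the ambient divergence of the 0-homogeneous
extension `sphField`. -/
def sphDiv (N : ℕ) (s : ℝ) (ψ : EuclideanSpace ℝ (Fin (N+1)) → ℝ)
    (θ : EuclideanSpace ℝ (Fin (N+1))) : ℝ :=
  ∑ i : Fin (N+1),
    fderiv ℝ (sphField N s ψ) θ (EuclideanSpace.single i 1) i

/-! ### Auxiliary machinery -/

abbrev Euc (n : ℕ) : Type := EuclideanSpace ℝ (Fin n)

section aux

variable {n : ℕ}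

lemma hasFDerivAt_norm_rpow'' (c : ℝ) {z : Euc n} (hz : z ≠ 0) :
    HasFDerivAt (fun w : Euc n => ‖w‖ ^ c)
      ((c * ‖z‖ ^ (c - 2)) • innerSL ℝ z) z := by
  have h2 : HasFDerivAt (fun w : Euc n => ‖w‖ ^ 2) ((2:ℝ) • innerSL ℝ z) z := by
    have := (hasFDerivAt_id z).norm_sq
    exact this.congr_fderiv (by ext v; simp [two_smul])
  have hz2 : ‖z‖ ≠ 0 := norm_ne_zero_iff.mpr hz
  have key := h2.rpow_const (p := c/2) (Or.inl (by positivity))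
  have hfun : (fun w : Euc n => (‖w‖ ^ 2) ^ (c/2)) = (fun w : Euc n => ‖w‖ ^ c) := by
    funext w
    rw [← Real.rpow_natCast ‖w‖ 2, ← Real.rpow_mul (norm_nonneg w)]
    rw [show ((2:ℕ):ℝ) * (c/2) = c by push_cast; ring]
  rw [hfun] at key
  refine key.congr_fderiv ?_
  rw [smul_smul]
  congr 1
  rw [← Real.rpow_natCast ‖z‖ 2, ← Real.rpow_mul (norm_nonneg z)]
  rw [show ((2:ℕ):ℝ) * (c/2 - 1) = c - 2 by push_cast; ring]
  ring

lemma hasFDerivAt_proj' (i : Fin n) (z : Euc n) :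
    HasFDerivAt (fun w : Euc n => w i) (EuclideanSpace.proj (𝕜 := ℝ) i) z := by
  have := (EuclideanSpace.proj (𝕜 := ℝ) (ι := Fin n) i).hasFDerivAt (x := z)
  simpa using this

lemma grad_coord (ψ : Euc n → ℝ) (w : Euc n) (i : Fin n) :
    gradient ψ w i = fderiv ℝ ψ w (EuclideanSpace.single i 1) := by
  have h1 : (gradient ψ w) i
      = (inner ℝ (gradient ψ w) (EuclideanSpace.single i (1:ℝ)) : ℝ) := by
    rw [EuclideanSpace.inner_single_right]; simp
  rw [h1]
  exact InnerProductSpace.toDual_symm_apply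

lemma psi_contDiffAt {ψ : Euc n → ℝ} (hψ : ContDiffOn ℝ (⊤ : ℕ∞) ψ {z : Euc n | z ≠ 0})
    {z : Euc n} (hz : z ≠ 0) : ContDiffAt ℝ (⊤ : ℕ∞) ψ z :=
  hψ.contDiffAt (isOpen_ne.mem_nhds hz)

lemma psi_diff {ψ : Euc n → ℝ} (hψ : ContDiffOn ℝ (⊤ : ℕ∞) ψ {z : Euc n | z ≠ 0})
    {z : Euc n} (hz : z ≠ 0) : DifferentiableAt ℝ ψ z :=
  (psi_contDiffAt hψ hz).differentiableAt (by simp)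

lemma psi_fderiv_diff {ψ : Euc n → ℝ} (hψ : ContDiffOn ℝ (⊤ : ℕ∞) ψ {z : Euc n | z ≠ 0})
    {z : Euc n} (hz : z ≠ 0) : DifferentiableAt ℝ (fderiv ℝ ψ) z := by
  have h1 : ContDiffAt ℝ 1 (fderiv ℝ ψ) z :=
    (psi_contDiffAt hψ hz).fderiv_right (WithTop.coe_le_coe.mpr le_top)
  exact h1.differentiableAt one_ne_zero

lemma psi_fderiv_apply_diff {ψ : Euc n → ℝ} (hψ : ContDiffOn ℝ (⊤ : ℕ∞) ψ {z : Euc n | z ≠ 0})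
    {z : Euc n} (hz : z ≠ 0) (i : Fin n) :
    DifferentiableAt ℝ (fun w => fderiv ℝ ψ w (EuclideanSpace.single i 1)) z :=
  (psi_fderiv_diff hψ hz).clm_apply (differentiableAt_const _)

lemma eulerDeriv {ψ : Euc n → ℝ}
    (hψ : ContDiffOn ℝ (⊤ : ℕ∞) ψ {z : Euc n | z ≠ 0})
    (hψhom : ∀ (c : ℝ) (z : Euc n), 0 < c → z ≠ 0 → ψ (c • z) = ψ z)
    {z : Euc n} (hz : z ≠ 0) : fderiv ℝ ψ z z = 0 := by
  have hsm : HasDerivAt (fun c : ℝ => c • z) z 1 := by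
    simpa using (hasDerivAt_id (1:ℝ)).smul_const z
  have h1 : HasDerivAt (fun c : ℝ => ψ (c • z)) (fderiv ℝ ψ ((1:ℝ) • z) z) 1 := by
    have hd := (psi_diff hψ (by simpa using hz : (1:ℝ) • z ≠ 0)).hasFDerivAt
    exact hd.comp_hasDerivAt 1 hsm
  rw [one_smul] at h1
  have h2 : HasDerivAt (fun c : ℝ => ψ (c • z)) 0 1 := by
    have hev : (fun c : ℝ => ψ (c • z)) =ᶠ[nhds 1] fun _ => ψ z := by
      filter_upwards [isOpen_Ioi.mem_nhds (by norm_num : (1:ℝ) ∈ Set.Ioi (0:ℝ))] with c hc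
      exact hψhom c z hc hz
    exact (hasDerivAt_const 1 (ψ z)).congr_of_eventuallyEq hev
  exact h1.unique h2

lemma sum_repr' (θ : Euc n) : θ = ∑ i, θ i • EuclideanSpace.single i (1:ℝ) := by
  have h := (EuclideanSpace.basisFun (Fin n) ℝ).sum_repr θ
  simp only [EuclideanSpace.basisFun_apply, EuclideanSpace.basisFun_repr] at h
  exact h.symm

lemma euler_sum {ψ : Euc n → ℝ} (hψ : ContDiffOn ℝ (⊤ : ℕ∞) ψ {z : Euc n | z ≠ 0})
    (hψhom : ∀ (c : ℝ) (z : Euc n), 0 < c → z ≠ 0 → ψ (c • z) = ψ z)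
    {θ : Euc n} (hθ0 : θ ≠ 0) :
    ∑ i, θ i * fderiv ℝ ψ θ (EuclideanSpace.single i 1) = 0 := by
  have h := eulerDeriv hψ hψhom hθ0
  calc ∑ i, θ i * fderiv ℝ ψ θ (EuclideanSpace.single i 1)
      = fderiv ℝ ψ θ (∑ i, θ i • EuclideanSpace.single i (1:ℝ)) := by
        rw [map_sum]; simp
    _ = 0 := by rw [← sum_repr' θ]; exact h

lemma norm_sum_unit {θ : Euc n} (hθ : ‖θ‖ = 1) : ∑ i, θ i * θ i = 1 := by
  have h : (inner ℝ θ θ : ℝ) = ‖θ‖ ^ 2 := real_inner_self_eq_norm_sq θ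
  rw [hθ] at h
  rw [PiLp.inner_apply] at h
  simpa [sq] using h

lemma delta_sum (L : Fin n) (f : Fin n → ℝ) :
    ∑ i, (if L = i then (1:ℝ) else 0) * f i = f L := by
  simp [ite_mul, Finset.sum_ite_eq]

lemma smul_coord (c : ℝ) (w : Euc n) (j : Fin n) : (c • w) j = c * w j := rfl

variable {ψ : Euc n → ℝ}

lemma hasFDerivAt_Psi (hψ : ContDiffOn ℝ (⊤ : ℕ∞) ψ {z : Euc n | z ≠ 0}) (a : ℝ) {z : Euc n}
    (hz : z ≠ 0) :
    HasFDerivAt (fun w : Euc n => ‖w‖ ^ a * ψ w)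
      (‖z‖ ^ a • fderiv ℝ ψ z + ψ z • ((a * ‖z‖ ^ (a - 2)) • innerSL ℝ z)) z :=
  (hasFDerivAt_norm_rpow'' a hz).mul (psi_diff hψ hz).hasFDerivAt

lemma fderiv_Psi_apply (hψ : ContDiffOn ℝ (⊤ : ℕ∞) ψ {z : Euc n | z ≠ 0}) (a : ℝ) {z : Euc n}
    (hz : z ≠ 0) (i : Fin n) :
    fderiv ℝ (fun w : Euc n => ‖w‖ ^ a * ψ w) z (EuclideanSpace.single i 1)
      = ‖z‖ ^ a * fderiv ℝ ψ z (EuclideanSpace.single i 1)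
        + a * (‖z‖ ^ (a - 2) * (ψ z * z i)) := by
  rw [(hasFDerivAt_Psi hψ a hz).fderiv]
  simp [EuclideanSpace.inner_single_right]
  ring

/-- The vector-field components whose divergence is `degenOp`. -/
def gfun (n : ℕ) (L : Fin n) (m a : ℝ) (ψ : Euc n → ℝ) (i : Fin n) : Euc n → ℝ :=
  fun w => (w L) ^ m * fderiv ℝ (fun u : Euc n => ‖u‖ ^ a * ψ u) w (EuclideanSpace.single i 1)

/-- Generic form of `sphField`. -/
def sphf (n : ℕ) (L : Fin n) (m : ℝ) (ψ : Euc n → ℝ) : Euc n → Euc n :=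
  fun z => ((z L / ‖z‖) ^ m * ‖z‖) • gradient ψ z

variable {L : Fin n} {m a : ℝ}

lemma gfun_eventuallyEq (hψ : ContDiffOn ℝ (⊤ : ℕ∞) ψ {z : Euc n | z ≠ 0}) {w : Euc n} (hw : w ≠ 0)
    (i : Fin n) :
    gfun n L m a ψ i =ᶠ[nhds w] fun u =>
      (u L) ^ m * (‖u‖ ^ a * fderiv ℝ ψ u (EuclideanSpace.single i 1)
        + a * (‖u‖ ^ (a - 2) * (ψ u * u i))) := by
  filter_upwards [isOpen_ne.mem_nhds hw] with u hu
  show gfun n L m a ψ i u = _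
  rw [gfun, fderiv_Psi_apply hψ a hu i]

lemma gfun_differentiableAt (hψ : ContDiffOn ℝ (⊤ : ℕ∞) ψ {z : Euc n | z ≠ 0}) {w : Euc n} (hw : w ≠ 0)
    (htw : w L ≠ 0) (i : Fin n) :
    DifferentiableAt ℝ (gfun n L m a ψ i) w := by
  have hDi := (psi_fderiv_apply_diff hψ hw i).hasFDerivAt
  have h1 := (hasFDerivAt_norm_rpow'' a hw).mul hDi
  have h2 := (psi_diff hψ hw).hasFDerivAt.mul (hasFDerivAt_proj' i w)
  have h3 := (hasFDerivAt_norm_rpow'' (a-2) hw).mul h2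
  have h4 := h3.const_mul a
  have hF := h1.add h4
  have hτ := (hasFDerivAt_proj' L w).rpow_const (p := m) (Or.inl htw)
  have hfull := hτ.mul hF
  exact (hfull.congr_of_eventuallyEq (gfun_eventuallyEq hψ hw i)).differentiableAt

lemma fderiv_gfun_unit (hψ : ContDiffOn ℝ (⊤ : ℕ∞) ψ {z : Euc n | z ≠ 0}) {θ : Euc n} (hθ : ‖θ‖ = 1)
    (htθ : θ L ≠ 0) (i : Fin n) :
    fderiv ℝ (gfun n L m a ψ i) θ (EuclideanSpace.single i 1)
      = (θ L) ^ m * (fderiv ℝ (fun w => fderiv ℝ ψ w (EuclideanSpace.single i 1)) θ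
            (EuclideanSpace.single i 1)
          + 2*a*(θ i * fderiv ℝ ψ θ (EuclideanSpace.single i 1))
          + a*(a-2)*(ψ θ)*(θ i * θ i) + a*(ψ θ))
        + (m * (θ L) ^ (m-1)) * ((if L = i then (1:ℝ) else 0)
            * (fderiv ℝ ψ θ (EuclideanSpace.single i 1) + a*(ψ θ)*(θ i))) := by
  have hθ0 : θ ≠ 0 := by intro h; rw [h] at hθ; simp at hθ
  have hDi := (psi_fderiv_apply_diff hψ hθ0 i).hasFDerivAt
  have h1 := (hasFDerivAt_norm_rpow'' a hθ0).mul hDi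
  have h2 := (psi_diff hψ hθ0).hasFDerivAt.mul (hasFDerivAt_proj' i θ)
  have h3 := (hasFDerivAt_norm_rpow'' (a-2) hθ0).mul h2
  have h4 := h3.const_mul a
  have hF := h1.add h4
  have hτ := (hasFDerivAt_proj' L θ).rpow_const (p := m) (Or.inl htθ)
  have hfull := hτ.mul hF
  rw [(hfull.congr_of_eventuallyEq (gfun_eventuallyEq hψ hθ0 i)).fderiv]
  simp [hθ, EuclideanSpace.inner_single_right, mul_comm]
  ring_nf

lemma degenOp_unit (hψ : ContDiffOn ℝ (⊤ : ℕ∞) ψ {z : Euc n | z ≠ 0})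
    (hψhom : ∀ (c : ℝ) (z : Euc n), 0 < c → z ≠ 0 → ψ (c • z) = ψ z)
    {θ : Euc n} (hθ : ‖θ‖ = 1) (htθ : 0 < θ L) :
    ∑ i, fderiv ℝ (gfun n L m a ψ i) θ (EuclideanSpace.single i 1)
      = m * (θ L) ^ (m-1) * fderiv ℝ ψ θ (EuclideanSpace.single L 1)
        + (θ L) ^ m * (∑ i, fderiv ℝ (fun w => fderiv ℝ ψ w (EuclideanSpace.single i 1)) θ
            (EuclideanSpace.single i 1))
        + (a * (a + m + (n:ℝ) - 2)) * ((θ L) ^ m * ψ θ) := by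
  have hθ0 : θ ≠ 0 := by intro h; rw [h] at hθ; simp at hθ
  set t := θ L with hts
  set D : Fin n → ℝ := fun i => fderiv ℝ ψ θ (EuclideanSpace.single i 1) with hD
  set Q : Fin n → ℝ := fun i => fderiv ℝ (fun w => fderiv ℝ ψ w (EuclideanSpace.single i 1)) θ
      (EuclideanSpace.single i 1) with hQ
  have step : ∀ i ∈ Finset.univ, fderiv ℝ (gfun n L m a ψ i) θ (EuclideanSpace.single i 1)
      = t ^ m * Q i + (2*a*t^m) * (θ i * D i)
        + (a*(a-2)*(ψ θ)*t^m) * (θ i * θ i) + a*(ψ θ)*t^m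
        + (m*t^(m-1)) * ((if L = i then (1:ℝ) else 0) * D i)
        + (a*(ψ θ)*m*t^(m-1)) * ((if L = i then (1:ℝ) else 0) * θ i) := by
    intro i _
    rw [fderiv_gfun_unit hψ hθ htθ.ne' i]
    ring
  rw [Finset.sum_congr rfl step]
  have htm : t^(m-1) * t = t^m := by
    nth_rewrite 2 [← Real.rpow_one t]
    rw [← Real.rpow_add htθ]; norm_num
  simp only [Finset.sum_add_distrib, ← Finset.mul_sum]
  rw [euler_sum hψ hψhom hθ0, norm_sum_unit hθ, delta_sum L D, delta_sum L (fun i => θ i)]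
  simp only [Finset.sum_const, Finset.card_univ, Fintype.card_fin, nsmul_eq_mul]
  linear_combination (a * (ψ θ) * m) * htm

lemma sphf_coord (w : Euc n) (i : Fin n) :
    sphf n L m ψ w i
      = ((w L / ‖w‖) ^ m * ‖w‖) * fderiv ℝ ψ w (EuclideanSpace.single i 1) := by
  show (((w L / ‖w‖) ^ m * ‖w‖) • gradient ψ w) i = _
  rw [PiLp.smul_apply, smul_eq_mul, grad_coord]

lemma sphf_coord_eventuallyEq {θ : Euc n} (hθ0 : θ ≠ 0) (i : Fin n) :
    (fun w => sphf n L m ψ w i) =ᶠ[nhds θ] fun w =>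
      ((w L * ‖w‖ ^ (-1:ℝ)) ^ m * ‖w‖ ^ (1:ℝ)) * fderiv ℝ ψ w (EuclideanSpace.single i 1) := by
  filter_upwards [isOpen_ne.mem_nhds hθ0] with w hw
  rw [sphf_coord, Real.rpow_one, Real.rpow_neg_one, div_eq_mul_inv]

lemma sphf_diff (hψ : ContDiffOn ℝ (⊤ : ℕ∞) ψ {z : Euc n | z ≠ 0}) {θ : Euc n} (hθ : ‖θ‖ = 1)
    (hθL : θ L ≠ 0) : DifferentiableAt ℝ (sphf n L m ψ) θ := by
  have hθ0 : θ ≠ 0 := by intro h; rw [h] at hθ; simp at hθ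
  have hq := (hasFDerivAt_proj' L θ).mul (hasFDerivAt_norm_rpow'' (-1) hθ0)
  have hqne : ((fun w : Euc n => w L * ‖w‖ ^ (-1:ℝ)) θ) ≠ 0 := by
    simp only [hθ, Real.one_rpow, mul_one]
    exact hθL
  have hmodel : DifferentiableAt ℝ
      (fun w : Euc n => (w L * ‖w‖ ^ (-1:ℝ)) ^ m * ‖w‖ ^ (1:ℝ)) θ :=
    ((hq.rpow_const (p := m) (Or.inl hqne)).mul (hasFDerivAt_norm_rpow'' 1 hθ0)).differentiableAt
  have hsceq : (fun w : Euc n => (w L / ‖w‖) ^ m * ‖w‖)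
      =ᶠ[nhds θ] (fun w => (w L * ‖w‖ ^ (-1:ℝ)) ^ m * ‖w‖ ^ (1:ℝ)) := by
    filter_upwards [isOpen_ne.mem_nhds hθ0] with w hw
    rw [Real.rpow_one, Real.rpow_neg_one, div_eq_mul_inv]
  have hscal : DifferentiableAt ℝ (fun w : Euc n => (w L / ‖w‖) ^ m * ‖w‖) θ :=
    hsceq.differentiableAt_iff.mpr hmodel
  have hfd : DifferentiableAt ℝ (fderiv ℝ ψ) θ := psi_fderiv_diff hψ hθ0
  have hgrad : DifferentiableAt ℝ (gradient ψ) θ := by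
    have h2 := ((InnerProductSpace.toDual ℝ
        (Euc n)).symm.toContinuousLinearEquiv.differentiableAt).comp θ hfd
    exact h2
  exact hscal.smul hgrad

lemma fderiv_sphf_coord_unit (hψ : ContDiffOn ℝ (⊤ : ℕ∞) ψ {z : Euc n | z ≠ 0}) {θ : Euc n}
    (hθ : ‖θ‖ = 1) (htθ : θ L ≠ 0) (i : Fin n) :
    fderiv ℝ (fun w => sphf n L m ψ w i) θ (EuclideanSpace.single i 1)
      = (θ L) ^ m * (fderiv ℝ (fun w => fderiv ℝ ψ w (EuclideanSpace.single i 1)) θ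
            (EuclideanSpace.single i 1))
        + (θ L) ^ m * (θ i * fderiv ℝ ψ θ (EuclideanSpace.single i 1))
        + (m * (θ L) ^ (m-1)) * ((if L = i then (1:ℝ) else 0)
            * fderiv ℝ ψ θ (EuclideanSpace.single i 1))
        - (m * (θ L) ^ (m-1) * (θ L))
            * (θ i * fderiv ℝ ψ θ (EuclideanSpace.single i 1)) := by
  have hθ0 : θ ≠ 0 := by intro h; rw [h] at hθ; simp at hθ
  have hDi := (psi_fderiv_apply_diff hψ hθ0 i).hasFDerivAt
  have hq := (hasFDerivAt_proj' L θ).mul (hasFDerivAt_norm_rpow'' (-1) hθ0)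
  have hqne : ((fun w : Euc n => w L * ‖w‖ ^ (-1:ℝ)) θ) ≠ 0 := by
    simp only [hθ, Real.one_rpow, mul_one]
    exact htθ
  have hqm := hq.rpow_const (p := m) (Or.inl hqne)
  have hH := hqm.mul (hasFDerivAt_norm_rpow'' 1 hθ0)
  have hP := hH.mul hDi
  rw [(hP.congr_of_eventuallyEq (sphf_coord_eventuallyEq hθ0 i)).fderiv]
  simp [hθ, EuclideanSpace.inner_single_right, mul_comm]
  ring_nf

lemma sphdiv_unit (hψ : ContDiffOn ℝ (⊤ : ℕ∞) ψ {z : Euc n | z ≠ 0})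
    (hψhom : ∀ (c : ℝ) (z : Euc n), 0 < c → z ≠ 0 → ψ (c • z) = ψ z)
    {θ : Euc n} (hθ : ‖θ‖ = 1) (htθ : θ L ≠ 0) :
    ∑ i, fderiv ℝ (sphf n L m ψ) θ (EuclideanSpace.single i 1) i
      = m * (θ L) ^ (m-1) * fderiv ℝ ψ θ (EuclideanSpace.single L 1)
        + (θ L) ^ m * (∑ i, fderiv ℝ (fun w => fderiv ℝ ψ w (EuclideanSpace.single i 1)) θ
            (EuclideanSpace.single i 1)) := by
  have hθ0 : θ ≠ 0 := by intro h; rw [h] at hθ; simp at hθ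
  have hstep : ∀ i ∈ Finset.univ,
      fderiv ℝ (sphf n L m ψ) θ (EuclideanSpace.single i 1) i
        = fderiv ℝ (fun w => sphf n L m ψ w i) θ (EuclideanSpace.single i 1) := by
    intro i _
    have hd := (sphf_diff (m := m) hψ hθ htθ).hasFDerivAt
    have hc := ((EuclideanSpace.proj (𝕜 := ℝ) i).hasFDerivAt.comp θ hd).fderiv
    have hfun : (fun w => sphf n L m ψ w i)
        = (⇑(EuclideanSpace.proj (𝕜 := ℝ) i) ∘ sphf n L m ψ) := rfl
    rw [hfun, hc]
    rfl
  rw [Finset.sum_congr rfl hstep]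
  have hstep2 : ∀ i ∈ Finset.univ,
      fderiv ℝ (fun w => sphf n L m ψ w i) θ (EuclideanSpace.single i 1)
        = (θ L) ^ m * (fderiv ℝ (fun w => fderiv ℝ ψ w (EuclideanSpace.single i 1)) θ
              (EuclideanSpace.single i 1))
          + ((θ L) ^ m - m * (θ L) ^ (m-1) * (θ L))
              * (θ i * fderiv ℝ ψ θ (EuclideanSpace.single i 1))
          + (m * (θ L) ^ (m-1)) * ((if L = i then (1:ℝ) else 0)
              * fderiv ℝ ψ θ (EuclideanSpace.single i 1)) := by
    intro i _
    rw [fderiv_sphf_coord_unit hψ hθ htθ i]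
    ring
  rw [Finset.sum_congr rfl hstep2]
  simp only [Finset.sum_add_distrib, ← Finset.mul_sum]
  rw [euler_sum hψ hψhom hθ0,
    delta_sum L (fun i => fderiv ℝ ψ θ (EuclideanSpace.single i 1))]
  ring

lemma Psi_hom (hψhom : ∀ (c : ℝ) (z : Euc n), 0 < c → z ≠ 0 → ψ (c • z) = ψ z)
    (ha : 0 < a) {c : ℝ} (hc : 0 < c) (w : Euc n) :
    ‖c • w‖ ^ a * ψ (c • w) = c ^ a * (‖w‖ ^ a * ψ w) := by
  by_cases hw : w = 0
  · subst hw
    simp [Real.zero_rpow ha.ne']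
  · rw [norm_smul, hψhom c w hc hw, Real.norm_eq_abs, abs_of_pos hc,
      Real.mul_rpow hc.le (norm_nonneg w)]
    ring

lemma hasFDerivAt_smulmap (c : ℝ) (z : Euc n) :
    HasFDerivAt (fun u : Euc n => c • u) (c • ContinuousLinearMap.id ℝ (Euc n)) z := by
  exact (hasFDerivAt_id z).const_smul c

lemma fderiv_Psi_scale (hψ : ContDiffOn ℝ (⊤ : ℕ∞) ψ {z : Euc n | z ≠ 0})
    (hψhom : ∀ (c : ℝ) (z : Euc n), 0 < c → z ≠ 0 → ψ (c • z) = ψ z)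
    (ha : 0 < a) {c : ℝ} (hc : 0 < c) {z : Euc n} (hz : z ≠ 0) (v : Euc n) :
    fderiv ℝ (fun w : Euc n => ‖w‖ ^ a * ψ w) (c • z) v
      = c ^ (a-1) * fderiv ℝ (fun w : Euc n => ‖w‖ ^ a * ψ w) z v := by
  have hcz : c • z ≠ 0 := smul_ne_zero hc.ne' hz
  have hder := (hasFDerivAt_Psi hψ a hcz).differentiableAt.hasFDerivAt
  have h1 := hder.comp z (hasFDerivAt_smulmap c z)
  have h2 : ((fun w : Euc n => ‖w‖ ^ a * ψ w) ∘ (fun u : Euc n => c • u))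
      = fun u : Euc n => c ^ a * (‖u‖ ^ a * ψ u) := by
    funext u
    exact Psi_hom hψhom ha hc u
  rw [h2] at h1
  have h3 : HasFDerivAt (fun u : Euc n => c ^ a * (‖u‖ ^ a * ψ u))
      ((c ^ a) • fderiv ℝ (fun w : Euc n => ‖w‖ ^ a * ψ w) z) z :=
    ((hasFDerivAt_Psi hψ a hz).differentiableAt.hasFDerivAt).const_mul _
  have huniq := h1.unique h3
  have happ := congrFun (congrArg (fun (T : Euc n →L[ℝ] ℝ) => (T : Euc n → ℝ)) huniq) v
  simp only [ContinuousLinearMap.coe_comp', Function.comp_apply,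
    ContinuousLinearMap.smul_apply, ContinuousLinearMap.coe_smul', Pi.smul_apply,
    ContinuousLinearMap.coe_id', id_eq, smul_eq_mul] at happ
  have happ' : c * fderiv ℝ (fun w : Euc n => ‖w‖ ^ a * ψ w) (c • z) v
      = c ^ a * fderiv ℝ (fun w : Euc n => ‖w‖ ^ a * ψ w) z v := by
    rw [← happ, map_smul]
    simp [smul_eq_mul]
  have hca : c ^ (a-1) * c = c ^ a := by
    nth_rewrite 2 [← Real.rpow_one c]
    rw [← Real.rpow_add hc]; norm_num
  refine mul_left_cancel₀ hc.ne' ?_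
  rw [happ']
  linear_combination (- fderiv ℝ (fun w : Euc n => ‖w‖ ^ a * ψ w) z v) * hca

lemma gfun_scale_val (hψ : ContDiffOn ℝ (⊤ : ℕ∞) ψ {z : Euc n | z ≠ 0})
    (hψhom : ∀ (c : ℝ) (z : Euc n), 0 < c → z ≠ 0 → ψ (c • z) = ψ z)
    (ha : 0 < a) {c : ℝ} (hc : 0 < c) {w : Euc n} (hw : w ≠ 0) (htw : 0 < w L) (i : Fin n) :
    gfun n L m a ψ i (c • w) = c ^ (m + (a-1)) * gfun n L m a ψ i w := by
  show ((c • w) L) ^ m * _ = _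
  rw [smul_coord, Real.mul_rpow hc.le htw.le,
    fderiv_Psi_scale hψ hψhom ha hc hw (EuclideanSpace.single i 1),
    Real.rpow_add hc]
  show c ^ m * (w L) ^ m * (c ^ (a-1) * _) = c ^ m * c ^ (a-1) * ((w L) ^ m * _)
  ring

lemma fderiv_gfun_scale (hψ : ContDiffOn ℝ (⊤ : ℕ∞) ψ {z : Euc n | z ≠ 0})
    (hψhom : ∀ (c : ℝ) (z : Euc n), 0 < c → z ≠ 0 → ψ (c • z) = ψ z)
    (ha : 0 < a) {c : ℝ} (hc : 0 < c) {z : Euc n} (hz : z ≠ 0) (htz : 0 < z L) (i : Fin n) :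
    fderiv ℝ (gfun n L m a ψ i) (c • z) (EuclideanSpace.single i 1)
      = c ^ (m + a - 2) * fderiv ℝ (gfun n L m a ψ i) z (EuclideanSpace.single i 1) := by
  have hcz : c • z ≠ 0 := smul_ne_zero hc.ne' hz
  have htcz : 0 < (c • z) L := by rw [smul_coord]; positivity
  have h1 := ((gfun_differentiableAt (m := m) (a := a) hψ hcz htcz.ne' i).hasFDerivAt).comp z
    (hasFDerivAt_smulmap c z)
  have hV : IsOpen {u : Euc n | u ≠ 0 ∧ 0 < u L} := by
    apply IsOpen.inter isOpen_ne
    exact isOpen_lt continuous_const (EuclideanSpace.proj (𝕜 := ℝ) L).continuous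
  have h2germ : ((gfun n L m a ψ i) ∘ (fun u : Euc n => c • u)) =ᶠ[nhds z]
      fun u => c ^ (m + (a-1)) * gfun n L m a ψ i u := by
    filter_upwards [hV.mem_nhds ⟨hz, htz⟩] with u hu
    exact gfun_scale_val hψ hψhom ha hc hu.1 hu.2 i
  have heq1 : fderiv ℝ ((gfun n L m a ψ i) ∘ (fun u : Euc n => c • u)) z
      = (fderiv ℝ (gfun n L m a ψ i) (c • z)).comp (c • ContinuousLinearMap.id ℝ (Euc n)) :=
    h1.fderiv
  have heq2 : fderiv ℝ ((gfun n L m a ψ i) ∘ (fun u : Euc n => c • u)) z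
      = (c ^ (m + (a-1))) • fderiv ℝ (gfun n L m a ψ i) z := by
    rw [h2germ.fderiv_eq]
    exact fderiv_const_mul (gfun_differentiableAt hψ hz htz.ne' i) _
  have huniq := heq1.symm.trans heq2
  have happ := congrFun (congrArg (fun (T : Euc n →L[ℝ] ℝ) => (T : Euc n → ℝ)) huniq)
    (EuclideanSpace.single i 1)
  simp only [ContinuousLinearMap.coe_comp', Function.comp_apply,
    ContinuousLinearMap.smul_apply, ContinuousLinearMap.coe_smul', Pi.smul_apply,
    ContinuousLinearMap.coe_id', id_eq, smul_eq_mul] at happ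
  have happ' : c * fderiv ℝ (gfun n L m a ψ i) (c • z) (EuclideanSpace.single i 1)
      = c ^ (m + (a-1)) * fderiv ℝ (gfun n L m a ψ i) z (EuclideanSpace.single i 1) := by
    rw [← happ, map_smul]
    simp [smul_eq_mul]
  have hca : c ^ (m + a - 2) * c = c ^ (m + (a-1)) := by
    nth_rewrite 2 [← Real.rpow_one c]
    rw [← Real.rpow_add hc, show m + a - 2 + 1 = m + (a-1) by ring]
  refine mul_left_cancel₀ hc.ne' ?_
  rw [happ']
  linear_combination (- fderiv ℝ (gfun n L m a ψ i) z (EuclideanSpace.single i 1)) * hca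

end aux

/-- Let ψ be smooth on the closed upper half-sphere (here given as
a 0-homogeneous function on ℝ^{N+1}∖{0}, smooth away from the origin), and let
Ψ(z) = |z|^{k+s} ψ(z/|z|). Then div(t^{1−2s}∇Ψ) = 0 in ℝ^{N+1}_+ if and only if
−div_{S^N}(θ_{N+1}^{1−2s} ∇_{S^N}ψ) = θ_{N+1}^{1−2s}(k+s)(k+N−s) ψ on S^N_+. -/
theorem stmt_17 (N : ℕ) (hN : 2 ≤ N) (s : ℝ) (hs : s ∈ Set.Ioo (0:ℝ) 1) (k : ℕ)
    (ψ : EuclideanSpace ℝ (Fin (N+1)) → ℝ)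
    (hψsmooth : ContDiffOn ℝ (⊤ : ℕ∞) ψ {z : EuclideanSpace ℝ (Fin (N+1)) | z ≠ 0})
    (hψhom : ∀ (c : ℝ) (z : EuclideanSpace ℝ (Fin (N+1))),
      0 < c → z ≠ 0 → ψ (c • z) = ψ z) :
    (∀ z : EuclideanSpace ℝ (Fin (N+1)), 0 < z (Fin.last N) →
      degenOp N s (fun w => ‖w‖ ^ ((k:ℝ) + s) * ψ w) z = 0) ↔
    (∀ θ : EuclideanSpace ℝ (Fin (N+1)), ‖θ‖ = 1 → 0 < θ (Fin.last N) →
      -(sphDiv N s ψ θ)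
        = (θ (Fin.last N)) ^ (1 - 2*s) * (((k:ℝ) + s) * ((k:ℝ) + (N:ℝ) - s))
            * ψ θ) := by
  obtain ⟨hs0, hs1⟩ := hs
  have ha : 0 < (k:ℝ) + s := by positivity
  have hco : (((k:ℝ)+s) * (((k:ℝ)+s) + (1-2*s) + (((N+1:ℕ)):ℝ) - 2))
      = ((k:ℝ)+s) * ((k:ℝ)+(N:ℝ)-s) := by push_cast; ring
  have hdeg : ∀ z : Euc (N+1), degenOp N s (fun w => ‖w‖ ^ ((k:ℝ) + s) * ψ w) z
      = ∑ i, fderiv ℝ (gfun (N+1) (Fin.last N) (1-2*s) ((k:ℝ)+s) ψ i) z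
          (EuclideanSpace.single i 1) := fun z => rfl
  have hsph : ∀ θ : Euc (N+1), sphDiv N s ψ θ
      = ∑ i, fderiv ℝ (sphf (N+1) (Fin.last N) (1-2*s) ψ) θ
          (EuclideanSpace.single i 1) i := fun θ => rfl
  constructor
  · intro h θ hθ htθ
    have h0 := h θ htθ
    rw [hdeg θ, degenOp_unit hψsmooth hψhom hθ htθ] at h0
    rw [hsph θ, sphdiv_unit hψsmooth hψhom hθ htθ.ne']
    linear_combination (-1:ℝ) * h0 + ((θ (Fin.last N)) ^ (1-2*s) * ψ θ) * hco
  · intro h z htz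
    have hz0 : z ≠ 0 := by
      intro h0; rw [h0] at htz; simp at htz
    have hr : 0 < ‖z‖ := norm_pos_iff.mpr hz0
    set θ : Euc (N+1) := ‖z‖⁻¹ • z with hθdef
    have hθn : ‖θ‖ = 1 := norm_smul_inv_norm hz0
    have hθ0 : θ ≠ 0 := by intro hh; rw [hh] at hθn; simp at hθn
    have hθL : 0 < θ (Fin.last N) := by
      rw [hθdef, smul_coord]
      exact mul_pos (inv_pos.mpr hr) htz
    have hzθ : z = ‖z‖ • θ := (smul_inv_smul₀ hr.ne' z).symm
    rw [hdeg z]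
    have hstep : ∀ i ∈ Finset.univ,
        fderiv ℝ (gfun (N+1) (Fin.last N) (1-2*s) ((k:ℝ)+s) ψ i) z (EuclideanSpace.single i 1)
          = ‖z‖ ^ ((1-2*s) + ((k:ℝ)+s) - 2)
              * fderiv ℝ (gfun (N+1) (Fin.last N) (1-2*s) ((k:ℝ)+s) ψ i) θ
                  (EuclideanSpace.single i 1) := by
      intro i _
      conv_lhs => rw [hzθ]
      exact fderiv_gfun_scale hψsmooth hψhom ha hr hθ0 hθL i
    rw [Finset.sum_congr rfl hstep, ← Finset.mul_sum,
      degenOp_unit hψsmooth hψhom hθn hθL]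
    apply mul_eq_zero_of_right
    have hsp := h θ hθn hθL
    rw [hsph θ, sphdiv_unit hψsmooth hψhom hθn hθL.ne'] at hsp
    linear_combination (-1:ℝ) * hsp + ((θ (Fin.last N)) ^ (1-2*s) * ψ θ) * hco

end
end
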